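/- arXiv:2111.14748 — 4 statements merged into one kernel-verified Lean document; each statement's English description precedes it below -/
import Mathlib

section
/- The integral over the unit disk of log|z| · 4/(1+|z|²)² with respect to Lebesgue measure equals -2π log 2. -/
/-!
Integrating in polar coordinates reduces the claim to
`∫₀¹ 4 r log r / (1 + r²)² dr = -log 2`, and
`r ↦ 2 r² log r / (1 + r²) - log (1 + r²)` is a primitive of that integrand on `(0, 1)`,
continuous on `[0, 1]`, vanishing at `0` and equal to `-log 2` at `1`.
-/

open MeasureTheory Set Metric Real

theorem integral_ball_fun_norm_addHaar {E F : Type*} [NormedAddCommGroup E] [NormedSpace ℝ E]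
    [FiniteDimensional ℝ E] [Nontrivial E] [MeasurableSpace E] [BorelSpace E]
    [NormedAddCommGroup F] [NormedSpace ℝ F] (μ : Measure E) [μ.IsAddHaarMeasure] (f : ℝ → F)
    {R : ℝ} (hR : 0 ≤ R) :
    ∫ x in ball (0 : E) R, f ‖x‖ ∂μ =
      Module.finrank ℝ E • μ.real (ball 0 1) •
        ∫ r in (0 : ℝ)..R, r ^ (Module.finrank ℝ E - 1) • f r := by
  have h_indicator : (ball (0 : E) R).indicator (fun x => f ‖x‖) =
      fun x => (Iio R).indicator f ‖x‖ := by
    ext x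
    simp only [indicator, mem_ball_zero_iff, mem_Iio]
  have h_radial : ∫ r in Ioi 0, r ^ (Module.finrank ℝ E - 1) • (Iio R).indicator f r =
      ∫ r in (0 : ℝ)..R, r ^ (Module.finrank ℝ E - 1) • f r := by
    simp_rw [← indicator_smul_apply (Iio R) (fun r : ℝ => r ^ (Module.finrank ℝ E - 1)) f]
    rw [integral_indicator measurableSet_Iio, Measure.restrict_restrict measurableSet_Iio,
      Iio_inter_Ioi, intervalIntegral.integral_of_le hR, integral_Ioc_eq_integral_Ioo]
  rw [← integral_indicator measurableSet_ball, h_indicator, integral_fun_norm_addHaar μ,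
    h_radial]

theorem integral_ball_complex_fun_norm (f : ℝ → ℝ) {R : ℝ} (hR : 0 ≤ R) :
    ∫ z in ball (0 : ℂ) R, f ‖z‖ = 2 * π * ∫ r in (0 : ℝ)..R, r * f r := by
  rw [integral_ball_fun_norm_addHaar volume f hR, Complex.finrank_real_complex]
  simp only [Measure.real, Complex.volume_ball, ENNReal.ofReal_one, one_pow, one_mul,
    ENNReal.coe_toReal, NNReal.coe_real_pi, Nat.add_one_sub_one, pow_one, smul_eq_mul,
    nsmul_eq_mul, Nat.cast_ofNat]
  ring

theorem hasDerivAt_sq_mul_log_div_sub_log {x : ℝ} (hx : x ≠ 0) :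
    HasDerivAt (fun r => 2 * r ^ 2 * log r / (1 + r ^ 2) - log (1 + r ^ 2))
      (x * (log x * (4 / (1 + x ^ 2) ^ 2))) x := by
  have h_den_ne : 1 + x ^ 2 ≠ 0 := by positivity
  have h_den : HasDerivAt (fun r : ℝ => 1 + r ^ 2) (2 * x) x := by
    simpa using (hasDerivAt_pow 2 x).const_add 1
  have h_num : HasDerivAt (fun r : ℝ => 2 * r ^ 2 * log r) (4 * x * log x + 2 * x) x :=
    (((hasDerivAt_pow 2 x).const_mul 2).mul (hasDerivAt_log hx)).congr_deriv
      (by field_simp; ring)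
  refine ((h_num.div h_den h_den_ne).sub (h_den.log h_den_ne)).congr_deriv ?_
  field_simp
  ring

theorem integral_mul_log_mul_four_div_one_add_sq_sq :
    ∫ r in (0 : ℝ)..1, r * (log r * (4 / (1 + r ^ 2) ^ 2)) = -log 2 := by
  have h_cont_weight : Continuous fun r : ℝ => 4 / (1 + r ^ 2) ^ 2 :=
    continuous_const.div (by fun_prop) fun r => by positivity
  have h_cont_primitive :
      Continuous fun r : ℝ => 2 * r ^ 2 * log r / (1 + r ^ 2) - log (1 + r ^ 2) := by
    have h_sq_log : Continuous fun r : ℝ => 2 * (r * log r) * r := by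
      have := continuous_mul_log
      fun_prop
    exact ((h_sq_log.congr fun r => by ring).div (by fun_prop) fun r => by positivity).sub
      ((by fun_prop : Continuous fun r : ℝ => 1 + r ^ 2).log fun r => by positivity)
  have h_integrable : IntervalIntegrable (fun r : ℝ => r * (log r * (4 / (1 + r ^ 2) ^ 2)))
      volume 0 1 := by
    simp_rw [← mul_assoc]
    exact (continuous_mul_log.mul h_cont_weight).intervalIntegrable 0 1
  rw [intervalIntegral.integral_eq_sub_of_hasDerivAt_of_le zero_le_one
    h_cont_primitive.continuousOn
    (fun x hx => hasDerivAt_sq_mul_log_div_sub_log hx.1.ne') h_integrable]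
  norm_num

/-- The integral over the unit disk of `4 log|z|/(1+|z|²)²` equals `-2π log 2`. -/
theorem stmt1 :
    ∫ z in Metric.ball (0 : ℂ) 1,
      Real.log ‖z‖ * (4 / (1 + ‖z‖ ^ 2) ^ 2)
    = -(2 * Real.pi * Real.log 2) := by
  rw [integral_ball_complex_fun_norm (fun r => log r * (4 / (1 + r ^ 2) ^ 2)) zero_le_one,
    integral_mul_log_mul_four_div_one_add_sq_sq]
  ring
end

section
/- If f : 𝔻 → ℂ is holomorphic with f' never zero, then μ(z) = log|f'(z)| - log(1+|f(z)|²) + log 2 satisfies the Liouville equation -Δμ = e^{2μ} on 𝔻. -/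
/-! Near each point of the disc, `log ‖f'‖` is harmonic, so `-Δμ = Δ log (1 + ‖f‖²)`. Writing
`g = ‖f‖²`, the chain rule `Δ (φ ∘ g) = φ'' ‖∇g‖² + φ' Δg` with `φ = log (1 + ·)`, together with
`‖∇g‖² = 4 ‖f‖² ‖f'‖²` and `Δg = 4 ‖f'‖²`,
gives `Δ log (1 + ‖f‖²) = 4 ‖f'‖² / (1 + ‖f‖²)² = e^{2μ}`. -/

/-- The Euclidean Laplacian of a function `u : ℂ → E`, viewing `ℂ ≅ ℝ²`. -/
noncomputable def laplacian {E : Type*} [NormedAddCommGroup E] [NormedSpace ℝ E]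
    (u : ℂ → E) (z : ℂ) : E :=
  fderiv ℝ (fun w => fderiv ℝ u w 1) z 1 +
    fderiv ℝ (fun w => fderiv ℝ u w Complex.I) z Complex.I

open Filter Topology Complex
open InnerProductSpace
open scoped Laplacian

theorem fderiv_fderiv_apply_eq_iteratedFDeriv {E F : Type*} [NormedAddCommGroup E]
    [NormedSpace ℝ E] [NormedAddCommGroup F] [NormedSpace ℝ F] {u : E → F} {z : E}
    (hu : ContDiffAt ℝ 2 u z) (v : E) :
    fderiv ℝ (fun w => fderiv ℝ u w v) z v = iteratedFDeriv ℝ 2 u z ![v, v] := by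
  have hd : DifferentiableAt ℝ (fderiv ℝ u) z :=
    (hu.fderiv_right (m := 1) le_rfl).differentiableAt one_ne_zero
  rw [fderiv_clm_apply hd (differentiableAt_const v), iteratedFDeriv_two_apply]
  simp

theorem ContDiffAt.laplacian_eq {F : Type*} [NormedAddCommGroup F] [NormedSpace ℝ F]
    {u : ℂ → F} {z : ℂ} (hu : ContDiffAt ℝ 2 u z) : laplacian u z = Δ u z := by
  rw [laplacian_eq_iteratedFDeriv_complexPlane, laplacian,
    fderiv_fderiv_apply_eq_iteratedFDeriv hu, fderiv_fderiv_apply_eq_iteratedFDeriv hu]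

theorem laplacian_sub_add_const {u v : ℂ → ℝ} {z : ℂ} (hu : ContDiffAt ℝ 2 u z)
    (hv : ContDiffAt ℝ 2 v z) (c : ℝ) :
    laplacian (fun w => u w - v w + c) z = laplacian u z - laplacian v z := by
  have huv : ContDiffAt ℝ 2 (u - v) z := hu.sub hv
  rw [ContDiffAt.laplacian_eq (u := fun w => u w - v w + c) (huv.add contDiffAt_const),
    hu.laplacian_eq, hv.laplacian_eq]
  exact (huv.laplacian_add contDiffAt_const).trans
    (by rw [hu.laplacian_sub hv, laplacian_const, Pi.zero_apply, add_zero])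

theorem fderiv_fderiv_comp_apply {E : Type*} [NormedAddCommGroup E] [NormedSpace ℝ E]
    {φ φ' : ℝ → ℝ} {φ'' : ℝ} {g : E → ℝ} {z : E} (hφ : ∀ᶠ s in 𝓝 (g z), HasDerivAt φ (φ' s) s)
    (hφ' : HasDerivAt φ' φ'' (g z)) (hg : ContDiffAt ℝ 2 g z) (v : E) :
    fderiv ℝ (fun w => fderiv ℝ (φ ∘ g) w v) z v
      = φ'' * fderiv ℝ g z v ^ 2 + φ' (g z) * fderiv ℝ (fun w => fderiv ℝ g w v) z v := by
  have hgd : ∀ᶠ w in 𝓝 z, DifferentiableAt ℝ g w :=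
    hg.eventually (by simp) |>.mono fun w hw => hw.differentiableAt two_ne_zero
  have hφg : ∀ᶠ w in 𝓝 z, HasDerivAt φ (φ' (g w)) (g w) :=
    hg.continuousAt.eventually hφ
  have hfirst : (fun w => fderiv ℝ (φ ∘ g) w v) =ᶠ[𝓝 z] fun w => φ' (g w) * fderiv ℝ g w v := by
    filter_upwards [hgd, hφg] with w hgw hφw
    rw [(hφw.comp_hasFDerivAt w hgw.hasFDerivAt).fderiv]
    simp
  have hdg : DifferentiableAt ℝ (fun w => fderiv ℝ g w v) z :=
    ((hg.fderiv_right (m := 1) le_rfl).differentiableAt one_ne_zero).clm_apply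
      (differentiableAt_const v)
  have hφ'g : HasFDerivAt (fun w => φ' (g w)) (φ'' • fderiv ℝ g z) z :=
    hφ'.comp_hasFDerivAt z hgd.self_of_nhds.hasFDerivAt
  rw [hfirst.fderiv_eq, (hφ'g.fun_mul hdg.hasFDerivAt).fderiv]
  simp only [add_apply, smul_apply, smul_eq_mul]
  ring

theorem laplacian_comp {φ φ' : ℝ → ℝ} {φ'' : ℝ} {g : ℂ → ℝ} {z : ℂ}
    (hφ : ∀ᶠ s in 𝓝 (g z), HasDerivAt φ (φ' s) s) (hφ' : HasDerivAt φ' φ'' (g z))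
    (hg : ContDiffAt ℝ 2 g z) :
    laplacian (φ ∘ g) z
      = φ'' * (fderiv ℝ g z 1 ^ 2 + fderiv ℝ g z Complex.I ^ 2) + φ' (g z) * laplacian g z := by
  rw [laplacian, laplacian, fderiv_fderiv_comp_apply hφ hφ' hg,
    fderiv_fderiv_comp_apply hφ hφ' hg]
  ring

theorem real_inner_sq_add_real_inner_mul_I_sq (a b : ℂ) :
    ⟪a, b⟫_ℝ ^ 2 + ⟪a, b * I⟫_ℝ ^ 2 = ‖a‖ ^ 2 * ‖b‖ ^ 2 := by
  simp only [Complex.inner, Complex.sq_norm, Complex.normSq_apply, mul_re, mul_im, conj_re,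
    conj_im, I_re, I_im]
  ring

section NormSq

variable {f : ℂ → ℂ} {z : ℂ}

theorem DifferentiableAt.fderiv_norm_sq_apply (hf : DifferentiableAt ℂ f z) (v : ℂ) :
    fderiv ℝ (fun w => ‖f w‖ ^ 2) z v = 2 * ⟪f z, deriv f z * v⟫_ℝ := by
  rw [(hf.hasDerivAt.complexToReal_fderiv.norm_sq).fderiv]
  simp only [ContinuousLinearMap.comp_apply, smul_apply, innerSL_apply_apply,
    one_apply_eq_self, smul_eq_mul, nsmul_eq_mul, Nat.cast_ofNat]

theorem AnalyticAt.fderiv_fderiv_norm_sq_apply (hf : AnalyticAt ℂ f z) (v : ℂ) :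
    fderiv ℝ (fun w => fderiv ℝ (fun w => ‖f w‖ ^ 2) w v) z v
      = 2 * ⟪f z, deriv (deriv f) z * v ^ 2⟫_ℝ + 2 * ‖deriv f z * v‖ ^ 2 := by
  have hfirst : (fun w => fderiv ℝ (fun w => ‖f w‖ ^ 2) w v)
      =ᶠ[𝓝 z] fun w => 2 * ⟪f w, deriv f w * v⟫_ℝ :=
    hf.eventually_analyticAt.mono fun w hw => hw.differentiableAt.fderiv_norm_sq_apply v
  have hinner := hf.differentiableAt.hasDerivAt.complexToReal_fderiv.inner ℝ
    (hf.deriv.differentiableAt.hasDerivAt.complexToReal_fderiv.mul_const v)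
  rw [hfirst.fderiv_eq, (hinner.const_mul 2).fderiv]
  simp only [ContinuousLinearMap.comp_apply, smul_apply, fderivInnerCLM_apply,
    ContinuousLinearMap.prod_apply, one_apply_eq_self, smul_eq_mul]
  rw [show v * (deriv (deriv f) z * v) = deriv (deriv f) z * v ^ 2 by ring,
    real_inner_self_eq_norm_sq]
  ring

theorem AnalyticAt.laplacian_norm_sq (hf : AnalyticAt ℂ f z) :
    laplacian (fun w => ‖f w‖ ^ 2) z = 4 * ‖deriv f z‖ ^ 2 := by
  -- the `f''` terms cancel because `1 ^ 2 + I ^ 2 = 0`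
  rw [laplacian, hf.fderiv_fderiv_norm_sq_apply, hf.fderiv_fderiv_norm_sq_apply]
  simp only [mul_one, one_pow, I_sq, mul_neg, inner_neg_right, norm_mul, norm_I]
  ring

theorem AnalyticAt.contDiffAt_norm_sq (hf : AnalyticAt ℂ f z) :
    ContDiffAt ℝ 2 (fun w => ‖f w‖ ^ 2) z :=
  (contDiff_norm_sq ℝ).contDiffAt.comp z (hf.contDiffAt.restrict_scalars ℝ)

theorem AnalyticAt.laplacian_log_one_add_norm_sq (hf : AnalyticAt ℂ f z) :
    laplacian (fun w => Real.log (1 + ‖f w‖ ^ 2)) z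
      = 4 * ‖deriv f z‖ ^ 2 / (1 + ‖f z‖ ^ 2) ^ 2 := by
  have hφ : ∀ᶠ s in 𝓝 (‖f z‖ ^ 2), HasDerivAt (fun s => Real.log (1 + s)) (1 + s)⁻¹ s := by
    filter_upwards [Ioi_mem_nhds (neg_one_lt_zero.trans_le (sq_nonneg ‖f z‖))] with s hs
    simpa using ((hasDerivAt_id s).const_add 1).log (ne_of_gt (by rw [id]; linarith [hs.out]))
  have hφ' : HasDerivAt (fun s => (1 + s)⁻¹) (-((1 + ‖f z‖ ^ 2) ^ 2)⁻¹) (‖f z‖ ^ 2) := by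
    simpa [div_eq_mul_inv] using
      ((hasDerivAt_id (‖f z‖ ^ 2)).const_add 1).fun_inv (by rw [id]; positivity)
  have hcomp := laplacian_comp hφ hφ' hf.contDiffAt_norm_sq
  rw [hf.differentiableAt.fderiv_norm_sq_apply, hf.differentiableAt.fderiv_norm_sq_apply,
    hf.laplacian_norm_sq, mul_pow, mul_pow, ← mul_add, mul_one,
    real_inner_sq_add_real_inner_mul_I_sq] at hcomp
  rw [show (fun w => Real.log (1 + ‖f w‖ ^ 2))
      = (fun s => Real.log (1 + s)) ∘ fun w => ‖f w‖ ^ 2 from rfl, hcomp]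
  field_simp
  ring

end NormSq

theorem Real.exp_two_mul_log_sub_log_add_log_two {a b : ℝ} (ha : 0 < a) (hb : 0 < b) :
    Real.exp (2 * (Real.log a - Real.log b + Real.log 2)) = 4 * a ^ 2 / b ^ 2 := by
  rw [show 2 * (Real.log a - Real.log b + Real.log 2) = Real.log ((2 * a / b) ^ 2) by
      rw [Real.log_pow, Real.log_div (by positivity) hb.ne', Real.log_mul two_ne_zero ha.ne']
      push_cast
      ring,
    Real.exp_log (by positivity)]
  ring

/-- If `f` is holomorphic on 𝔻 with `f'` never zero, then
`μ(z) = log|f'(z)| - log(1+|f(z)|²) + log 2` satisfies the Liouville equation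
`-Δμ = e^{2μ}` on 𝔻. -/
theorem stmt10 (f : ℂ → ℂ) (hf : DifferentiableOn ℂ f (Metric.ball 0 1))
    (hf' : ∀ z ∈ Metric.ball (0 : ℂ) 1, deriv f z ≠ 0) :
    ∀ z ∈ Metric.ball (0 : ℂ) 1,
      -laplacian (fun w : ℂ =>
          Real.log (‖deriv f w‖) - Real.log (1 + ‖f w‖ ^ 2)
            + Real.log 2) z
        = Real.exp (2 * (Real.log (‖deriv f z‖)
            - Real.log (1 + ‖f z‖ ^ 2) + Real.log 2)) := by
  intro z hz
  have hA : AnalyticAt ℂ f z := hf.analyticAt (Metric.isOpen_ball.mem_nhds hz)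
  have hharm : HarmonicAt (fun w => Real.log ‖deriv f w‖) z :=
    hA.deriv.harmonicAt_log_norm (hf' z hz)
  have hlog : ContDiffAt ℝ 2 (fun w => Real.log (1 + ‖f w‖ ^ 2)) z :=
    (contDiffAt_const.add hA.contDiffAt_norm_sq).log (by positivity)
  rw [laplacian_sub_add_const hharm.1 hlog, hharm.1.laplacian_eq, hharm.2.self_of_nhds,
    hA.laplacian_log_one_add_norm_sq,
    Real.exp_two_mul_log_sub_log_add_log_two (norm_pos_iff.2 (hf' z hz)) (by positivity),
    Pi.zero_apply, zero_sub, neg_neg]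
end

section
/- For f(z) = z e^{i log log z} on a half-disk 𝔻₊(0,ε) = {z : Im z > 0, |z| < ε} with ε small (using the principal branch of log on the upper half-plane), one has f''(z)/f'(z) = i(-1 + i + log z)/(z log z (i + log z)), and ∫_{𝔻(0,1/2)} |f''/f'|² |dz|² ≤ 4π/log 2 + 4π/(3 log² 2) < ∞. -/
/-
Off the real axis `f(z) = z e^{i log log z}` is holomorphic with `f' = e^{i log log z} (1 + i / log z)`,
and logarithmic differentiation of this product gives the formula for `f''/f'`.
Writing `log z = x + i a` with `x = log |z|`, a polynomial inequality eliminates the angle `a` and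
gives the radial bound `|f''/f'|² ≤ (2 x⁻² + (5/4) x⁻⁴) / |z|²`. In polar coordinates its integral
over the disk of radius `1/2` is `2π ∫₀^{1/2} (2 / (r log² r) + 5 / (4 r log⁴ r)) dr
= 2π (2 / log 2 + 5 / (12 log³ 2))`, which is below the claimed constant because `log 2 > 5/8`.
-/

open Complex Filter Topology MeasureTheory Set Metric

lemma setIntegral_ball_fun_norm_addHaar {E F : Type*} [NormedAddCommGroup E] [NormedSpace ℝ E]
    [Nontrivial E] [FiniteDimensional ℝ E] [MeasurableSpace E] [BorelSpace E]
    [NormedAddCommGroup F] [NormedSpace ℝ F]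
    (μ : Measure E) [μ.IsAddHaarMeasure] (f : ℝ → F) (R : ℝ) :
    ∫ x in ball (0 : E) R, f ‖x‖ ∂μ = Module.finrank ℝ E • μ.real (ball 0 1) •
      ∫ y in Ioo (0 : ℝ) R, y ^ (Module.finrank ℝ E - 1) • f y := by
  have hball : (ball (0 : E) R).indicator (fun x => f ‖x‖) = fun x => (Iio R).indicator f ‖x‖ := by
    ext x; simp [indicator]
  have hIoo : (Ioi 0).indicator (fun y => y ^ (Module.finrank ℝ E - 1) • (Iio R).indicator f y)
      = (Ioo 0 R).indicator fun y => y ^ (Module.finrank ℝ E - 1) • f y := by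
    ext y; by_cases hy : y < R <;> by_cases hy0 : 0 < y <;> simp [indicator, hy, hy0]
  rw [← integral_indicator measurableSet_ball, hball, integral_fun_norm_addHaar,
    ← integral_indicator measurableSet_Ioi, hIoo, integral_indicator measurableSet_Ioo]

lemma Complex.ae_im_ne_zero : ∀ᵐ z : ℂ, z.im ≠ 0 := by
  have hker : (LinearMap.ker imLm : Set ℂ) = {z | z.im = 0} := by ext; simp
  rw [ae_iff]
  simp only [ne_eq, not_not]
  rw [← hker]
  refine Measure.addHaar_submodule _ _ fun h => ?_
  have : I ∈ LinearMap.ker imLm := h ▸ Submodule.mem_top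
  simp at this

lemma continuousOn_inv_neg_log {b : ℝ} (hb : b < 1) :
    ContinuousOn (fun r => (-Real.log r)⁻¹) (Icc 0 b) := by
  intro r hr
  rcases hr.1.eq_or_lt with rfl | hr0
  -- the junk value `(-log 0)⁻¹ = 0` is also the limit at `0`
  · refine (continuousWithinAt_compl_self.1 ?_).continuousWithinAt
    simpa [ContinuousWithinAt, Function.comp_def, Pi.inv_def] using
      (tendsto_neg_atBot_atTop.comp Real.tendsto_log_nhdsNE_zero).inv_tendsto_atTop
  · have : -Real.log r ≠ 0 := (neg_pos.2 (Real.log_neg hr0 (hr.2.trans_lt hb))).ne'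
    exact ((Real.continuousAt_log hr0.ne').neg.inv₀ this).continuousWithinAt

lemma hasDerivAt_inv_neg_log_pow {r : ℝ} (hr0 : 0 < r) (hr1 : r < 1) (k : ℕ) :
    HasDerivAt (fun r => (-Real.log r)⁻¹ ^ (k + 1) / (k + 1))
      (r⁻¹ * (-Real.log r)⁻¹ ^ (k + 2)) r := by
  have hL : -Real.log r ≠ 0 := (neg_pos.2 (Real.log_neg hr0 hr1)).ne'
  refine ((((Real.hasDerivAt_log hr0.ne').neg.inv hL).pow (k + 1)).div_const _).congr_deriv ?_
  simp only [Pi.inv_apply, Pi.neg_apply]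
  push_cast
  field_simp
  ring

lemma intervalIntegrable_inv_mul_inv_neg_log_pow {b : ℝ} (hb0 : 0 ≤ b) (hb1 : b < 1) (k : ℕ) :
    IntervalIntegrable (fun r => r⁻¹ * (-Real.log r)⁻¹ ^ (k + 2)) volume 0 b :=
  (intervalIntegrable_iff_integrableOn_Ioc_of_le hb0).2 <|
    intervalIntegral.integrableOn_deriv_of_nonneg
      (((continuousOn_inv_neg_log hb1).pow _).div_const _)
      (fun _ hr => hasDerivAt_inv_neg_log_pow hr.1 (hr.2.trans hb1) k)
      (fun _ hr => mul_nonneg (inv_nonneg.2 hr.1.le)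
        (pow_nonneg (inv_nonneg.2 (neg_nonneg.2 (Real.log_nonpos hr.1.le (hr.2.trans hb1).le))) _))

lemma integral_inv_mul_inv_neg_log_pow {b : ℝ} (hb0 : 0 ≤ b) (hb1 : b < 1) (k : ℕ) :
    ∫ r in 0..b, r⁻¹ * (-Real.log r)⁻¹ ^ (k + 2) = (-Real.log b)⁻¹ ^ (k + 1) / (k + 1) := by
  rw [intervalIntegral.integral_eq_sub_of_hasDerivAt_of_le hb0
    (((continuousOn_inv_neg_log hb1).pow _).div_const _)
    (fun r hr => hasDerivAt_inv_neg_log_pow hr.1 (hr.2.trans hb1) k)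
    (intervalIntegrable_inv_mul_inv_neg_log_pow hb0 hb1 k)]
  simp

noncomputable def logLogSpiral (w : ℂ) : ℂ := w * exp (I * log (log w))

lemma log_mem_slitPlane_of_im_ne_zero {z : ℂ} (hz : z.im ≠ 0) : log z ∈ slitPlane :=
  mem_slitPlane_iff.2 <| Or.inr <| by
    rw [log_im]; exact fun h => hz (arg_eq_zero_iff.1 h).2

lemma hasDerivAt_log_log {z : ℂ} (hz : z.im ≠ 0) :
    HasDerivAt (fun w => log (log w)) (1 / (z * log z)) z :=
  ((hasDerivAt_log (log_mem_slitPlane_of_im_ne_zero hz)).comp z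
    (hasDerivAt_log (mem_slitPlane_iff.2 (Or.inr hz)))).congr_deriv
    (by rw [one_div, mul_inv, mul_comm])

lemma hasDerivAt_logLogSpiral {z : ℂ} (hz : z.im ≠ 0) :
    HasDerivAt logLogSpiral (exp (I * log (log z)) * (1 + I / log z)) z := by
  have hz0 : z ≠ 0 := slitPlane_ne_zero (mem_slitPlane_iff.2 (Or.inr hz))
  refine ((hasDerivAt_id' z).mul ((hasDerivAt_log_log hz).const_mul I).cexp).congr_deriv ?_
  field_simp

lemma deriv_deriv_div_deriv_logLogSpiral {z : ℂ} (hz : z.im ≠ 0) :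
    deriv (deriv logLogSpiral) z / deriv logLogSpiral z
      = I * (-1 + I + log z) / (z * log z * (I + log z)) := by
  have hz0 : z ≠ 0 := slitPlane_ne_zero (mem_slitPlane_iff.2 (Or.inr hz))
  have hL : log z ≠ 0 := slitPlane_ne_zero (log_mem_slitPlane_of_im_ne_zero hz)
  have hfg : deriv logLogSpiral =ᶠ[𝓝 z] fun w => exp (I * log (log w)) * (1 + I / log w) := by
    filter_upwards [isOpen_ne_fun continuous_im continuous_const |>.mem_nhds hz] with w hw
    exact (hasDerivAt_logLogSpiral hw).deriv
  have hg : HasDerivAt (fun w => exp (I * log (log w)) * (1 + I / log w))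
      (exp (I * log (log z)) * (I / (z * log z)) * (1 + I / log z)
        + exp (I * log (log z)) * (-I / (z * log z ^ 2))) z := by
    refine (((hasDerivAt_log_log hz).const_mul I).cexp.mul
      (((hasDerivAt_const z (I : ℂ)).div (hasDerivAt_log (mem_slitPlane_iff.2 (Or.inr hz))) hL
        ).const_add 1)).congr_deriv ?_
    simp only [Pi.div_apply]
    field_simp
    ring
  rw [hfg.deriv_eq, hg.deriv, (hasDerivAt_logLogSpiral hz).deriv]
  rcases eq_or_ne (I + log z) 0 with h | h
  -- at `z = e^{-i}` both `f'(z)` and the denominator vanish, so both sides are the junk value `0`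
  · have : log z = -I := by linear_combination h
    simp [this]
  · have hE := exp_ne_zero (I * log (log z))
    have h1 : 1 + I / log z ≠ 0 := by
      rwa [← mul_ne_zero_iff_right hL, add_mul, div_mul_cancel₀ _ hL, one_mul, add_comm]
    rw [div_eq_div_iff (mul_ne_zero hE h1) (mul_ne_zero (mul_ne_zero hz0 hL) h)]
    field_simp
    ring

/- With `m = a (1 + a)`, the right side minus the left side is
`x⁶ + 2x⁵ + (11/12 + 3(a + 1/3)²) x⁴ + (2m² + 5/8 + 5/2 (a + 1/2)²) x² + 5/4 m²`. -/
lemma sq_sub_one_add_sq_mul_pow_four_le (x a : ℝ) :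
    ((x - 1) ^ 2 + (1 + a) ^ 2) * x ^ 4
      ≤ (2 * x ^ 2 + 5 / 4) * (x ^ 2 + a ^ 2) * (x ^ 2 + (1 + a) ^ 2) := by
  have key : 0 ≤ x ^ 2 * (x ^ 4 + 2 * x ^ 3 + 11 / 12 * x ^ 2 + 5 / 8) :=
    mul_nonneg (sq_nonneg x) (by nlinarith [sq_nonneg (x ^ 2 + x - 1 / 12), sq_nonneg (x + 1)])
  nlinarith [mul_nonneg (pow_nonneg (sq_nonneg x) 2) (sq_nonneg (a + 1 / 3)),
    mul_nonneg (sq_nonneg x) (sq_nonneg (a + 1 / 2)), sq_nonneg (a * (1 + a)),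
    mul_nonneg (sq_nonneg x) (sq_nonneg (a * (1 + a)))]

lemma norm_div_mul_sq_le {w : ℂ} (hw : w.re ≠ 0) :
    ‖(-1 + I + w) / (w * (I + w))‖ ^ 2 ≤ 2 * w.re⁻¹ ^ 2 + 5 / 4 * w.re⁻¹ ^ 4 := by
  have hx : 0 < w.re ^ 2 := by positivity
  have hnum : ‖-1 + I + w‖ ^ 2 = (w.re - 1) ^ 2 + (1 + w.im) ^ 2 := by
    rw [Complex.sq_norm, normSq_apply]; simp; ring
  have hw2 : ‖w‖ ^ 2 = w.re ^ 2 + w.im ^ 2 := by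
    rw [Complex.sq_norm, normSq_apply]; ring
  have hIw : ‖I + w‖ ^ 2 = w.re ^ 2 + (1 + w.im) ^ 2 := by
    rw [Complex.sq_norm, normSq_apply]; simp; ring
  rw [norm_div, norm_mul, div_pow, mul_pow, hnum, hw2, hIw]
  calc _ ≤ (2 * w.re ^ 2 + 5 / 4) / w.re ^ 4 := by
        rw [div_le_div_iff₀ (by positivity) (by positivity)]
        linarith [sq_sub_one_add_sq_mul_pow_four_le w.re w.im]
    _ = 2 * w.re⁻¹ ^ 2 + 5 / 4 * w.re⁻¹ ^ 4 := by field_simp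

noncomputable def radialBound (r : ℝ) : ℝ :=
  (2 * (Real.log r)⁻¹ ^ 2 + 5 / 4 * (Real.log r)⁻¹ ^ 4) / r ^ 2

lemma norm_deriv_deriv_div_deriv_logLogSpiral_sq_le {z : ℂ} (hz : z.im ≠ 0) (hz1 : ‖z‖ < 1) :
    ‖deriv (deriv logLogSpiral) z / deriv logLogSpiral z‖ ^ 2 ≤ radialBound ‖z‖ := by
  have hz0 : 0 < ‖z‖ := norm_pos_iff.2 (slitPlane_ne_zero (mem_slitPlane_iff.2 (Or.inr hz)))
  have hre : (log z).re ≠ 0 := by rw [log_re]; exact (Real.log_neg hz0 hz1).ne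
  have hnorm : ‖I * (-1 + I + log z) / (z * log z * (I + log z))‖
      = ‖(-1 + I + log z) / (log z * (I + log z))‖ / ‖z‖ := by
    simp only [norm_div, norm_mul, norm_I]; ring
  rw [deriv_deriv_div_deriv_logLogSpiral hz, hnorm, div_pow, radialBound, ← log_re]
  exact div_le_div_of_nonneg_right (norm_div_mul_sq_le hre) (by positivity)

lemma mul_radialBound {r : ℝ} (hr : r ≠ 0) :
    r * radialBound r
      = 2 * (r⁻¹ * (-Real.log r)⁻¹ ^ 2) + 5 / 4 * (r⁻¹ * (-Real.log r)⁻¹ ^ 4) := by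
  rw [radialBound, inv_neg, neg_sq, Even.neg_pow (by decide)]
  field_simp

lemma integrableOn_radialBound_ball {R : ℝ} (hR0 : 0 ≤ R) (hR1 : R < 1) :
    IntegrableOn (fun z : ℂ => radialBound ‖z‖) (ball 0 R) := by
  have hint : IntervalIntegrable
      (fun r => 2 * (r⁻¹ * (-Real.log r)⁻¹ ^ 2) + 5 / 4 * (r⁻¹ * (-Real.log r)⁻¹ ^ 4)) volume 0 R :=
    ((intervalIntegrable_inv_mul_inv_neg_log_pow hR0 hR1 0).const_mul 2).add
      ((intervalIntegrable_inv_mul_inv_neg_log_pow hR0 hR1 2).const_mul _)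
  rw [integrableOn_fun_norm_addHaar, finrank_real_complex]
  refine (((intervalIntegrable_iff_integrableOn_Ioc_of_le hR0).1 hint).mono_set
    Ioo_subset_Ioc_self).congr_fun (fun r hr => ?_) measurableSet_Ioo
  simp [mul_radialBound hr.1.ne']

lemma setIntegral_radialBound_ball {R : ℝ} (hR0 : 0 ≤ R) (hR1 : R < 1) :
    ∫ z in ball (0 : ℂ) R, radialBound ‖z‖
      = 2 * Real.pi * (2 * (-Real.log R)⁻¹ + 5 / 12 * (-Real.log R)⁻¹ ^ 3) := by
  have hradial : ∫ r in Ioo 0 R, r ^ (2 - 1) • radialBound r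
      = ∫ r in 0..R, 2 * (r⁻¹ * (-Real.log r)⁻¹ ^ 2) + 5 / 4 * (r⁻¹ * (-Real.log r)⁻¹ ^ 4) := by
    rw [intervalIntegral.integral_of_le hR0, integral_Ioc_eq_integral_Ioo]
    refine setIntegral_congr_fun measurableSet_Ioo fun r hr => ?_
    rw [pow_one, smul_eq_mul, mul_radialBound hr.1.ne']
  have hsq : ∫ r in 0..R, r⁻¹ * (-Real.log r)⁻¹ ^ 2 = (-Real.log R)⁻¹ := by
    simpa using integral_inv_mul_inv_neg_log_pow hR0 hR1 0
  have hfourth : ∫ r in 0..R, r⁻¹ * (-Real.log r)⁻¹ ^ 4 = (-Real.log R)⁻¹ ^ 3 / 3 := by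
    rw [integral_inv_mul_inv_neg_log_pow hR0 hR1 2]
    norm_num
  rw [setIntegral_ball_fun_norm_addHaar, finrank_real_complex, hradial,
    intervalIntegral.integral_add
      ((intervalIntegrable_inv_mul_inv_neg_log_pow hR0 hR1 0).const_mul 2)
      ((intervalIntegrable_inv_mul_inv_neg_log_pow hR0 hR1 2).const_mul _),
    intervalIntegral.integral_const_mul, intervalIntegral.integral_const_mul, hsq, hfourth]
  simp [Measure.real]
  ring

/-- For `f(z) = z e^{i log log z}` (principal branch of log), one has
`f''/f' = i(-1+i+log z)/(z log z (i+log z))` on a small upper half-disk, and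
`∫_{𝔻(0,1/2)} |f''/f'|² ≤ 4π/log 2 + 4π/(3 log² 2)`. -/
theorem stmt13 :
    (∃ ε > (0 : ℝ), ∀ z : ℂ, 0 < z.im → norm z < ε →
      deriv (deriv (fun w : ℂ => w * Complex.exp (Complex.I * Complex.log (Complex.log w)))) z
        / deriv (fun w : ℂ => w * Complex.exp (Complex.I * Complex.log (Complex.log w))) z
      = Complex.I * (-1 + Complex.I + Complex.log z)
          / (z * Complex.log z * (Complex.I + Complex.log z))) ∧
    (∫ z in Metric.ball (0 : ℂ) (1 / 2),
        norm
          (deriv (deriv (fun w : ℂ =>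
              w * Complex.exp (Complex.I * Complex.log (Complex.log w)))) z
            / deriv (fun w : ℂ =>
              w * Complex.exp (Complex.I * Complex.log (Complex.log w))) z) ^ 2)
      ≤ 4 * Real.pi / Real.log 2 + 4 * Real.pi / (3 * Real.log 2 ^ 2) := by
  rw [show (fun w : ℂ => w * exp (I * log (log w))) = logLogSpiral from rfl]
  refine ⟨⟨1, one_pos, fun z hz _ => deriv_deriv_div_deriv_logLogSpiral hz.ne'⟩, ?_⟩
  have hlog : -Real.log (1 / 2) = Real.log 2 := by rw [one_div, Real.log_inv, neg_neg]
  have hlog2 : 5 / 8 < Real.log 2 := by linarith [Real.log_two_gt_d9]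
  calc ∫ z in ball (0 : ℂ) (1 / 2), ‖deriv (deriv logLogSpiral) z / deriv logLogSpiral z‖ ^ 2
      ≤ ∫ z in ball (0 : ℂ) (1 / 2), radialBound ‖z‖ := by
        refine integral_mono_of_nonneg (ae_of_all _ fun _ => sq_nonneg _)
          (integrableOn_radialBound_ball (by norm_num) (by norm_num)) ?_
        filter_upwards [ae_restrict_mem measurableSet_ball, ae_restrict_of_ae ae_im_ne_zero]
          with z hz him
        exact norm_deriv_deriv_div_deriv_logLogSpiral_sq_le him
          (by linarith [mem_ball_zero_iff.1 hz])
    _ = 2 * Real.pi * (2 * (Real.log 2)⁻¹ + 5 / 12 * (Real.log 2)⁻¹ ^ 3) := by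
        rw [setIntegral_radialBound_ball (by norm_num) (by norm_num), hlog]
    _ ≤ 4 * Real.pi / Real.log 2 + 4 * Real.pi / (3 * Real.log 2 ^ 2) := by
        have hπ := Real.pi_pos
        field_simp
        nlinarith [mul_pos hπ (Real.log_pos one_lt_two)]
end

section
/- If g is holomorphic on ℂ \ 𝔻̄ and g̃(z) = g(1/z) on 𝔻 \ {0}, then for z ∈ 𝔻 \ {0}: g̃''(z)/g̃'(z) - 2(g̃'(z)/g̃(z))|g̃(z)|²/(1+|g̃(z)|²) = -(1/z²)(g''(1/z)/g'(1/z) - 2(g'(1/z)/g(1/z))|g(1/z)|²/(1+|g(1/z)|²) + 2z); consequently ∫_𝔻 |g̃''/g̃' - 2(g̃'/g̃)|g̃|²/(1+|g̃|²)|² |dz|² = ∫_{ℂ\𝔻̄} |g''/g' - 2(g'/g)|g|²/(1+|g|²) + 2/z|² |dz|². -/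
/-!
The chain rule for `g̃ = g ∘ (1 / ·)` gives `g̃'(z) = -g'(1/z) / z²` and
`g̃''(z) = g''(1/z) / z⁴ + 2 g'(1/z) / z³`, and `|g̃(z)| = |g(1/z)|`, so the pointwise identity is
algebra. Its squared modulus carries the factor `|z|⁻⁴`, the real Jacobian of `z ↦ 1/z`, so the
integral identity is the change of variables `w = 1/z` from `𝔻 ∖ {0}` onto `ℂ ∖ 𝔻̄`.
-/

open MeasureTheory Metric Topology

/-- Since `(g' / g) |g|² = g' ḡ`, this is `2 ∂ log (|g'| / (1 + |g|²))`. -/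
noncomputable def sphericalPreSchwarzian (g : ℂ → ℂ) (z : ℂ) : ℂ :=
  deriv (deriv g) z / deriv g z
    - 2 * (deriv g z / g z) * (((‖g z‖ ^ 2 : ℝ) / (1 + ‖g z‖ ^ 2 : ℝ) : ℝ) : ℂ)

section Inversion

variable {𝕜 : Type*} [NontriviallyNormedField 𝕜] {g : 𝕜 → 𝕜} {z : 𝕜}

theorem hasDerivAt_comp_one_div (hz : z ≠ 0) (hg : DifferentiableAt 𝕜 g (1 / z)) :
    HasDerivAt (fun w => g (1 / w)) (-deriv g (1 / z) / z ^ 2) z := by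
  have hinv : HasDerivAt (fun w : 𝕜 => 1 / w) (-(z ^ 2)⁻¹) z := by
    simpa only [one_div] using hasDerivAt_inv hz
  exact (hg.hasDerivAt.comp z hinv).congr_deriv (by ring)

theorem deriv_deriv_comp_one_div (hz : z ≠ 0) (hg : ∀ᶠ w in 𝓝 (1 / z), DifferentiableAt 𝕜 g w)
    (hg' : DifferentiableAt 𝕜 (deriv g) (1 / z)) :
    deriv (deriv (fun w => g (1 / w))) z
      = deriv (deriv g) (1 / z) / z ^ 4 + 2 * deriv g (1 / z) / z ^ 3 := by
  have hnear : ∀ᶠ w in 𝓝 z, w ≠ 0 ∧ DifferentiableAt 𝕜 g (1 / w) :=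
    (eventually_ne_nhds hz).and ((continuousAt_const.div continuousAt_id hz).eventually hg)
  have hderiv : deriv (fun w => g (1 / w)) =ᶠ[𝓝 z] fun w => -deriv g (1 / w) / w ^ 2 :=
    hnear.mono fun w hw => (hasDerivAt_comp_one_div hw.1 hw.2).deriv
  rw [hderiv.deriv_eq]
  refine (((hasDerivAt_comp_one_div hz hg').neg.div (hasDerivAt_pow 2 z)
    (pow_ne_zero 2 hz)).deriv).trans ?_
  simp only [Pi.neg_apply]
  field_simp
  ring

end Inversion

theorem sphericalPreSchwarzian_comp_one_div {g : ℂ → ℂ} {z : ℂ} (hz : z ≠ 0)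
    (hg : ∀ᶠ w in 𝓝 (1 / z), DifferentiableAt ℂ g w) (hg' : DifferentiableAt ℂ (deriv g) (1 / z))
    (hg'0 : deriv g (1 / z) ≠ 0) :
    sphericalPreSchwarzian (fun w => g (1 / w)) z
      = -(1 / z ^ 2) * (sphericalPreSchwarzian g (1 / z) + 2 * z) := by
  simp only [sphericalPreSchwarzian, (hasDerivAt_comp_one_div hz hg.self_of_nhds).deriv,
    deriv_deriv_comp_one_div hz hg hg']
  field_simp
  ring

theorem det_restrictScalars_smulRight_one (c : ℂ) :
    (((1 : ℂ →L[ℂ] ℂ).smulRight c).restrictScalars ℝ).det = ‖c‖ ^ 2 := by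
  simp [ContinuousLinearMap.det, LinearMap.det_restrictScalars, Algebra.norm_complex_eq,
    Complex.normSq_eq_norm_sq]

theorem setIntegral_image_inv {E : Type*} [NormedAddCommGroup E] [NormedSpace ℝ E] {s : Set ℂ}
    (hs : MeasurableSet s) (h0 : (0 : ℂ) ∉ s) (f : ℂ → E) :
    ∫ w in (fun z => z⁻¹) '' s, f w = ∫ z in s, (‖z‖ ^ 4)⁻¹ • f z⁻¹ := by
  have hderiv : ∀ z ∈ s, HasFDerivWithinAt (fun z : ℂ => z⁻¹)
      (((1 : ℂ →L[ℂ] ℂ).smulRight (-(z ^ 2)⁻¹)).restrictScalars ℝ) s z := fun z hz =>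
    ((hasDerivAt_inv (ne_of_mem_of_not_mem hz h0)).hasFDerivAt.restrictScalars ℝ).hasFDerivWithinAt
  rw [integral_image_eq_integral_abs_det_fderiv_smul volume hs hderiv inv_injective.injOn f]
  refine setIntegral_congr_fun hs fun z _ => ?_
  rw [det_restrictScalars_smulRight_one]
  simp [← pow_mul]

theorem image_inv_ball_diff_zero {𝕜 : Type*} [NormedDivisionRing 𝕜] :
    (fun z : 𝕜 => z⁻¹) '' (ball 0 1 \ {0}) = (closedBall 0 1)ᶜ := by
  rw [inv_involutive.image_eq_preimage_symm]
  ext w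
  rcases eq_or_ne w 0 with rfl | hw
  · simp
  · simp [hw, inv_lt_one₀ (norm_pos_iff.2 hw)]

theorem stmt18_general (g : ℂ → ℂ)
    (hg : DifferentiableOn ℂ g (Metric.closedBall (0 : ℂ) 1)ᶜ)
    (hg'ne : ∀ z ∈ (Metric.closedBall (0 : ℂ) 1)ᶜ, deriv g z ≠ 0) :
    (∀ z ∈ Metric.ball (0 : ℂ) 1 \ {0},
      deriv (deriv (fun w => g (1 / w))) z / deriv (fun w => g (1 / w)) z
        - 2 * (deriv (fun w => g (1 / w)) z / g (1 / z))
            * (((norm (g (1 / z)) ^ 2 : ℝ)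
                / (1 + norm (g (1 / z)) ^ 2 : ℝ) : ℝ) : ℂ)
      = -(1 / z ^ 2) * (deriv (deriv g) (1 / z) / deriv g (1 / z)
          - 2 * (deriv g (1 / z) / g (1 / z))
              * (((norm (g (1 / z)) ^ 2 : ℝ)
                  / (1 + norm (g (1 / z)) ^ 2 : ℝ) : ℝ) : ℂ)
          + 2 * z)) ∧
    (∫ z in Metric.ball (0 : ℂ) 1,
        norm (deriv (deriv (fun w => g (1 / w))) z / deriv (fun w => g (1 / w)) z
          - 2 * (deriv (fun w => g (1 / w)) z / g (1 / z))
              * (((norm (g (1 / z)) ^ 2 : ℝ)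
                  / (1 + norm (g (1 / z)) ^ 2 : ℝ) : ℝ) : ℂ)) ^ 2
      = ∫ z in (Metric.closedBall (0 : ℂ) 1)ᶜ,
          norm (deriv (deriv g) z / deriv g z
            - 2 * (deriv g z / g z)
                * (((norm (g z) ^ 2 : ℝ) / (1 + norm (g z) ^ 2 : ℝ) : ℝ) : ℂ)
            + 2 / z) ^ 2) := by
  have hU : IsOpen (closedBall (0 : ℂ) 1)ᶜ := isClosed_closedBall.isOpen_compl
  have hmem : ∀ z ∈ ball (0 : ℂ) 1 \ {0}, 1 / z ∈ (closedBall (0 : ℂ) 1)ᶜ := fun z hz => by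
    rw [← image_inv_ball_diff_zero]
    exact ⟨z, hz, (one_div z).symm⟩
  have hpointwise : ∀ z ∈ ball (0 : ℂ) 1 \ {0}, sphericalPreSchwarzian (fun w => g (1 / w)) z
      = -(1 / z ^ 2) * (sphericalPreSchwarzian g (1 / z) + 2 * z) := fun z hz =>
    sphericalPreSchwarzian_comp_one_div hz.2
      (hg.eventually_differentiableAt (hU.mem_nhds (hmem z hz)))
      ((hg.deriv hU).differentiableAt (hU.mem_nhds (hmem z hz))) (hg'ne _ (hmem z hz))
  refine ⟨hpointwise, ?_⟩
  have hs : MeasurableSet (ball (0 : ℂ) 1 \ {0}) := measurableSet_ball.diff (measurableSet_singleton 0)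
  calc ∫ z in ball (0 : ℂ) 1, ‖sphericalPreSchwarzian (fun w => g (1 / w)) z‖ ^ 2
      = ∫ z in ball (0 : ℂ) 1 \ {0}, ‖sphericalPreSchwarzian (fun w => g (1 / w)) z‖ ^ 2 :=
        setIntegral_congr_set
          (sdiff_ae_eq_self.2 (measure_mono_null Set.inter_subset_right (measure_singleton 0))).symm
    _ = ∫ z in ball (0 : ℂ) 1 \ {0}, (‖z‖ ^ 4)⁻¹ • ‖sphericalPreSchwarzian g z⁻¹ + 2 / z⁻¹‖ ^ 2 := by
        refine setIntegral_congr_fun hs fun z hz => ?_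
        rw [hpointwise z hz, norm_mul, mul_pow, smul_eq_mul, div_inv_eq_mul, one_div]
        simp [← pow_mul]
    _ = ∫ w in (closedBall (0 : ℂ) 1)ᶜ, ‖sphericalPreSchwarzian g w + 2 / w‖ ^ 2 := by
        rw [← image_inv_ball_diff_zero, setIntegral_image_inv hs (fun h => h.2 rfl)]

/-- For `g` holomorphic on `ℂ ∖ 𝔻̄` (with `g`, `g'` nonvanishing there) and
`g̃(z) = g(1/z)`, the pointwise identity
`g̃''/g̃' - 2(g̃'/g̃)|g̃|²/(1+|g̃|²) = -(1/z²)(g''/g' - 2(g'/g)|g|²/(1+|g|²) + 2z)∘(1/z)`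
holds on `𝔻 ∖ {0}`, and consequently the corresponding squared integrals agree. -/
theorem stmt18 (g : ℂ → ℂ)
    (hg : DifferentiableOn ℂ g (Metric.closedBall (0 : ℂ) 1)ᶜ)
    (hgne : ∀ z ∈ (Metric.closedBall (0 : ℂ) 1)ᶜ, g z ≠ 0)
    (hg'ne : ∀ z ∈ (Metric.closedBall (0 : ℂ) 1)ᶜ, deriv g z ≠ 0) :
    (∀ z ∈ Metric.ball (0 : ℂ) 1 \ {0},
      deriv (deriv (fun w => g (1 / w))) z / deriv (fun w => g (1 / w)) z
        - 2 * (deriv (fun w => g (1 / w)) z / g (1 / z))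
            * (((norm (g (1 / z)) ^ 2 : ℝ)
                / (1 + norm (g (1 / z)) ^ 2 : ℝ) : ℝ) : ℂ)
      = -(1 / z ^ 2) * (deriv (deriv g) (1 / z) / deriv g (1 / z)
          - 2 * (deriv g (1 / z) / g (1 / z))
              * (((norm (g (1 / z)) ^ 2 : ℝ)
                  / (1 + norm (g (1 / z)) ^ 2 : ℝ) : ℝ) : ℂ)
          + 2 * z)) ∧
    (∫ z in Metric.ball (0 : ℂ) 1,
        norm (deriv (deriv (fun w => g (1 / w))) z / deriv (fun w => g (1 / w)) z
          - 2 * (deriv (fun w => g (1 / w)) z / g (1 / z))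
              * (((norm (g (1 / z)) ^ 2 : ℝ)
                  / (1 + norm (g (1 / z)) ^ 2 : ℝ) : ℝ) : ℂ)) ^ 2
      = ∫ z in (Metric.closedBall (0 : ℂ) 1)ᶜ,
          norm (deriv (deriv g) z / deriv g z
            - 2 * (deriv g z / g z)
                * (((norm (g z) ^ 2 : ℝ) / (1 + norm (g z) ^ 2 : ℝ) : ℝ) : ℂ)
            + 2 / z) ^ 2) :=
  stmt18_general g hg hg'ne
end
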